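/- Let S_n be star bodies in R^d with distance functions f_n converging uniformly on the unit ball to the distance function f of a star body S, and let L_n be lattices converging to a lattice L. Then for each i = 1,...,d, limsup_{n -> infinity} lambda_i(S_n, L_n) <= lambda_i(S, L). That is, the successive minima are upper semicontinuous in (S, L). -/

import Mathlib

def IsDistanceFunction {d : ℕ} (f : EuclideanSpace ℝ (Fin d) → ℝ) : Prop :=
  (∀ x, 0 ≤ f x) ∧ Continuous f ∧ ∀ (t : ℝ) (x), 0 ≤ t → f (t • x) = t * f x

def zspan {d : ℕ} (b : Fin d → EuclideanSpace ℝ (Fin d)) : Set (EuclideanSpace ℝ (Fin d)) :=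
  {x | ∃ c : Fin d → ℤ, x = ∑ i, (c i : ℝ) • b i}

def IsLattice {d : ℕ} (L : Set (EuclideanSpace ℝ (Fin d))) : Prop :=
  ∃ b : Fin d → EuclideanSpace ℝ (Fin d), LinearIndependent ℝ b ∧ L = zspan b

/-- The `i`-th successive minimum of the distance function `f` with respect to `L`:
the infimum over `i`-tuples of linearly independent points of `L` of the maximum
of their `f`-values (`∞` if no such tuple exists). -/
noncomputable def minima {d : ℕ} (f : EuclideanSpace ℝ (Fin d) → ℝ)
    (L : Set (EuclideanSpace ℝ (Fin d))) (i : ℕ) : ENNReal :=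
  ⨅ (l : Fin i → EuclideanSpace ℝ (Fin d))
    (_ : (∀ j, l j ∈ L) ∧ LinearIndependent ℝ l),
    ⨆ j, ENNReal.ofReal (f (l j))

def LatticeTendsto {d : ℕ} (L : ℕ → Set (EuclideanSpace ℝ (Fin d)))
    (L₀ : Set (EuclideanSpace ℝ (Fin d))) : Prop :=
  ∃ (bn : ℕ → Fin d → EuclideanSpace ℝ (Fin d)) (b : Fin d → EuclideanSpace ℝ (Fin d)),
    (∀ n, LinearIndependent ℝ (bn n) ∧ L n = zspan (bn n)) ∧
    (LinearIndependent ℝ b ∧ L₀ = zspan b) ∧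
    ∀ j, Filter.Tendsto (fun n => bn n j) Filter.atTop (nhds (b j))

/-! Take linearly independent vectors `l_1, …, l_i` of `L₀`. Their integer coordinates with
respect to the basis of `L₀`, applied to the converging bases of `L n`, give linearly independent
vectors of `L n` converging to the `l_j`. Homogeneity upgrades the uniform convergence `f n → g`
on the unit ball to every ball, so `f n` at these vectors converges to `g (l_j)`; hence the
`limsup` of the `i`-th minima is at most `max_j g (l_j)`. -/

open Filter Topology Metric

theorem TendstoUniformlyOn.closedBall_of_homogeneous {ι E : Type*} [NormedAddCommGroup E]
    [NormedSpace ℝ E] {l : Filter ι} {F : ι → E → ℝ} {f : E → ℝ}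
    (hF : ∀ n (t : ℝ) x, 0 ≤ t → F n (t • x) = t * F n x)
    (hf : ∀ (t : ℝ) x, 0 ≤ t → f (t • x) = t * f x)
    (h : TendstoUniformlyOn F f l (closedBall 0 1)) {R : ℝ} (hR : 0 < R) :
    TendstoUniformlyOn F f l (closedBall 0 R) := by
  have hscaled := (uniformContinuous_const_smul R).comp_tendstoUniformlyOn
    (h.comp fun x : E => R⁻¹ • x)
  have hdescale : ∀ (φ : E → ℝ), (∀ (t : ℝ) x, 0 ≤ t → φ (t • x) = t * φ x) →
      (fun x => R • φ (R⁻¹ • x)) = φ := fun φ hφ => funext fun x => by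
    rw [hφ _ _ (inv_nonneg.mpr hR.le), smul_eq_mul, mul_inv_cancel_left₀ hR.ne']
  simp only [Function.comp_def, hdescale f hf, hdescale _ (hF _)] at hscaled
  refine hscaled.mono fun x hx => ?_
  rw [Set.mem_preimage, mem_closedBall_zero_iff, norm_smul, norm_inv, Real.norm_of_nonneg hR.le]
  exact inv_mul_le_one_of_le₀ (mem_closedBall_zero_iff.mp hx) hR.le

theorem TendstoUniformlyOn.tendsto_comp_of_homogeneous {E : Type*} [NormedAddCommGroup E]
    [NormedSpace ℝ E] {F : ℕ → E → ℝ} {f : E → ℝ}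
    (hF : ∀ n (t : ℝ) x, 0 ≤ t → F n (t • x) = t * F n x)
    (hf : ∀ (t : ℝ) x, 0 ≤ t → f (t • x) = t * f x) (hfc : Continuous f)
    (h : TendstoUniformlyOn F f atTop (closedBall 0 1))
    {x : ℕ → E} {x₀ : E} (hx : Tendsto x atTop (𝓝 x₀)) :
    Tendsto (fun n => F n (x n)) atTop (𝓝 (f x₀)) := by
  have hball : ∀ᶠ n in atTop, x n ∈ closedBall 0 (‖x₀‖ + 1) := by
    simpa only [mem_closedBall_zero_iff] using
      hx.norm.eventually_le_const (lt_add_one ‖x₀‖)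
  exact (h.closedBall_of_homogeneous hF hf (by positivity)).tendsto_comp
    hfc.continuousWithinAt (tendsto_nhdsWithin_iff.mpr ⟨hx, hball⟩)

theorem linearIndependent_sum_smul_iff {R M ι κ : Type*} [CommRing R] [AddCommGroup M]
    [Module R M] [Fintype ι] {b : ι → M} (hb : LinearIndependent R b) {r : κ → ι → R} :
    LinearIndependent R (fun j => ∑ k, r j k • b k) ↔ LinearIndependent R r := by
  have hker : LinearMap.ker (Fintype.linearCombination R b) = ⊥ :=
    LinearMap.ker_eq_bot'.mpr fun c hc => funext (Fintype.linearIndependent_iff.mp hb c hc)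
  simpa only [Function.comp_def, Fintype.linearCombination_apply] using
    (Fintype.linearCombination R b).linearIndependent_iff (v := r) hker

theorem LatticeTendsto.exists_tendsto_of_linearIndependent {d : ℕ}
    {L : ℕ → Set (EuclideanSpace ℝ (Fin d))} {L₀ : Set (EuclideanSpace ℝ (Fin d))}
    (hL : LatticeTendsto L L₀) {ι : Type*} {l : ι → EuclideanSpace ℝ (Fin d)}
    (hlL : ∀ j, l j ∈ L₀) (hl : LinearIndependent ℝ l) :
    ∃ ln : ℕ → ι → EuclideanSpace ℝ (Fin d), (∀ n j, ln n j ∈ L n) ∧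
      (∀ n, LinearIndependent ℝ (ln n)) ∧ ∀ j, Tendsto (fun n => ln n j) atTop (𝓝 (l j)) := by
  obtain ⟨bn, b, hbn, ⟨hb, rfl⟩, hbtends⟩ := hL
  choose c hc using hlL
  have hc' : l = fun j => ∑ k, (c j k : ℝ) • b k := funext hc
  have hcoord : LinearIndependent ℝ fun j k => (c j k : ℝ) :=
    (linearIndependent_sum_smul_iff hb).mp (hc' ▸ hl)
  refine ⟨fun n j => ∑ k, (c j k : ℝ) • bn n k, fun n j => (hbn n).2 ▸ ⟨c j, rfl⟩,
    fun n => (linearIndependent_sum_smul_iff (hbn n).1).mpr hcoord, fun j => ?_⟩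
  rw [hc j]
  exact tendsto_finsetSum _ fun k _ => (hbtends k).const_smul _

theorem minima_le_iSup {d i : ℕ} (f : EuclideanSpace ℝ (Fin d) → ℝ)
    {L : Set (EuclideanSpace ℝ (Fin d))} {l : Fin i → EuclideanSpace ℝ (Fin d)}
    (hlL : ∀ j, l j ∈ L) (hl : LinearIndependent ℝ l) :
    minima f L i ≤ ⨆ j, ENNReal.ofReal (f (l j)) :=
  iInf₂_le l ⟨hlL, hl⟩

theorem successive_minima_upper_semicontinuous_general (d : ℕ)
    (f : ℕ → EuclideanSpace ℝ (Fin d) → ℝ) (g : EuclideanSpace ℝ (Fin d) → ℝ)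
    (hf : ∀ n, IsDistanceFunction (f n)) (hg : IsDistanceFunction g)
    (hconv : TendstoUniformlyOn f g Filter.atTop (Metric.closedBall 0 1))
    (L : ℕ → Set (EuclideanSpace ℝ (Fin d))) (L₀ : Set (EuclideanSpace ℝ (Fin d)))
    (hL : LatticeTendsto L L₀) (i : ℕ) :
    Filter.limsup (fun n => minima (f n) (L n) i) Filter.atTop ≤ minima g L₀ i := by
  refine le_iInf₂ fun l ⟨hlL, hl⟩ => ?_
  obtain ⟨ln, hlnL, hln, hlntends⟩ := hL.exists_tendsto_of_linearIndependent hlL hl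
  have hvalues : ∀ j, Tendsto (fun n => ENNReal.ofReal (f n (ln n j))) atTop
      (𝓝 (ENNReal.ofReal (g (l j)))) := fun j =>
    ENNReal.tendsto_ofReal <| hconv.tendsto_comp_of_homogeneous (fun n => (hf n).2.2)
      hg.2.2 hg.2.1 (hlntends j)
  have hmax : Tendsto (fun n => ⨆ j, ENNReal.ofReal (f n (ln n j))) atTop
      (𝓝 (⨆ j, ENNReal.ofReal (g (l j)))) := by
    simpa only [Finset.sup_univ_eq_iSup] using
      Tendsto.finset_sup_nhds_apply (s := Finset.univ) fun j _ => hvalues j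
  calc limsup (fun n => minima (f n) (L n) i) atTop
      ≤ limsup (fun n => ⨆ j, ENNReal.ofReal (f n (ln n j))) atTop :=
        limsup_le_limsup (.of_forall fun n => minima_le_iSup (f n) (hlnL n) (hln n))
    _ = ⨆ j, ENNReal.ofReal (g (l j)) := hmax.limsup_eq

theorem successive_minima_upper_semicontinuous (d : ℕ)
    (f : ℕ → EuclideanSpace ℝ (Fin d) → ℝ) (g : EuclideanSpace ℝ (Fin d) → ℝ)
    (hf : ∀ n, IsDistanceFunction (f n)) (hg : IsDistanceFunction g)
    (hconv : TendstoUniformlyOn f g Filter.atTop (Metric.closedBall 0 1))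
    (L : ℕ → Set (EuclideanSpace ℝ (Fin d))) (L₀ : Set (EuclideanSpace ℝ (Fin d)))
    (hL : LatticeTendsto L L₀) (i : ℕ) (hi : 1 ≤ i) (hid : i ≤ d) :
    Filter.limsup (fun n => minima (f n) (L n) i) Filter.atTop ≤ minima g L₀ i :=
  successive_minima_upper_semicontinuous_general d f g hf hg hconv L L₀ hL i
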